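/- arXiv:1204.4763 — 2 statements merged into one kernel-verified Lean document; each statement's English description precedes it below -/
import Mathlib

section
/- Let u ⊆ {1,…,d} and let v, v' be two subsets of the complement u^c. Let x, y, w, z be independent random vectors, each uniformly distributed on [0,1]^d. Then E[ (f(x) − f(x_v : z_{-v})) · (f(x_u : y_{-u}) − f(y_{v'} : w_{-v'})) ] = τ̲²_u. -/
/-!
Expand the product into four terms. On the fourfold product of the cube, each of the pairs
`(x, y_{v'} : w)`, `(x_v : z, x_u : y)` and `(x_v : z, y_{v'} : w)` is distributed as two
independent uniform points (for the middle pair because `v` and `u` are disjoint), so these three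
terms all equal `μ²`. The remaining term is `∫ f(x) f(x_u : y) = ∫ (∫ f(x_u : y) dy)² dx`, since
`x` and `x_u : y` are two points sharing the coordinates in `u`.
-/

open MeasureTheory Finset

/-- The uniform (Lebesgue) probability measure on the interval `[0,1]`. -/
noncomputable def unifSeg : Measure ℝ := (volume : Measure ℝ).restrict (Set.Icc 0 1)

/-- The uniform (Lebesgue) product probability measure on the cube `[0,1]^d`. -/
noncomputable def unifCube (d : ℕ) : Measure (Fin d → ℝ) :=
  Measure.pi fun _ => unifSeg

/-- `glue u x y` is the point whose `j`-th coordinate is `x j` for `j ∈ u`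
and `y j` otherwise, i.e. `(x_u : y_{-u})`. -/
def glue {d : ℕ} (u : Finset (Fin d)) (x y : Fin d → ℝ) : Fin d → ℝ :=
  fun j => if j ∈ u then x j else y j

/-- The lower Sobol' index `τ̲²_u` of the set `u`. -/
noncomputable def lowerSobol {d : ℕ} (f : (Fin d → ℝ) → ℝ) (u : Finset (Fin d)) : ℝ :=
  (∫ x, (∫ y, f (glue u x y) ∂(unifCube d)) ^ 2 ∂(unifCube d))
    - (∫ x, f x ∂(unifCube d)) ^ 2

/-- The variance `σ²` of `f` over the unit cube. -/
noncomputable def sigmaSq {d : ℕ} (f : (Fin d → ℝ) → ℝ) : ℝ :=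
  (∫ x, f x ^ 2 ∂(unifCube d)) - (∫ x, f x ∂(unifCube d)) ^ 2

/-- The upper Sobol' index `τ̄²_u = σ² - τ̲²_{uᶜ}` of the set `u`. -/
noncomputable def upperSobol {d : ℕ} (f : (Fin d → ℝ) → ℝ) (u : Finset (Fin d)) : ℝ :=
  sigmaSq f - lowerSobol f uᶜ

section MeasurePreserving

variable {Ω Ω' α β γ δ : Type*} [MeasurableSpace Ω] [MeasurableSpace Ω'] [MeasurableSpace α]
  [MeasurableSpace β] [MeasurableSpace γ] [MeasurableSpace δ]

theorem MeasureTheory.MeasurePreserving.integral_comp_of_aestronglyMeasurable {E : Type*}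
    [NormedAddCommGroup E] [NormedSpace ℝ E] {P : Measure Ω} {μ : Measure α} {T : Ω → α}
    (hT : MeasurePreserving T P μ) {g : α → E} (hg : AEStronglyMeasurable g μ) :
    ∫ ω, g (T ω) ∂P = ∫ a, g a ∂μ := by
  rw [← hT.map_eq] at hg
  rw [← hT.map_eq, integral_map hT.measurable.aemeasurable hg]

theorem MeasureTheory.MeasurePreserving.of_comp {Q : Measure Ω'} {P : Measure Ω} {μ : Measure α}
    {Φ : Ω' → Ω} (hΦ : MeasurePreserving Φ Q P) {T : Ω → α} (hT : Measurable T)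
    (hTΦ : MeasurePreserving (T ∘ Φ) Q μ) : MeasurePreserving T P μ :=
  ⟨hT, by rw [← hΦ.map_eq, Measure.map_map hT hΦ.measurable, hTΦ.map_eq]⟩

theorem integral_mul_of_measurePreserving_prod {P : Measure Ω} {μ : Measure α} {ν : Measure β}
    [SFinite μ] [SFinite ν] {S : Ω → α} {T : Ω → β}
    (hST : MeasurePreserving (fun ω => (S ω, T ω)) P (μ.prod ν)) {g : α → ℝ} {h : β → ℝ}
    (hg : AEStronglyMeasurable g μ) (hh : AEStronglyMeasurable h ν) :
    ∫ ω, g (S ω) * h (T ω) ∂P = (∫ a, g a ∂μ) * ∫ b, h b ∂ν :=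
  (hST.integral_comp_of_aestronglyMeasurable (g := fun p => g p.1 * h p.2)
    (hg.comp_fst.mul hh.comp_snd)).trans (integral_prod_mul g h)

theorem measurePreserving_prodProdProdComm (μa : Measure α) (μb : Measure β) (μc : Measure γ)
    (μd : Measure δ) [SFinite μa] [SFinite μb] [SFinite μc] [SFinite μd] :
    MeasurePreserving (fun p : (α × β) × (γ × δ) => ((p.1.1, p.2.1), (p.1.2, p.2.2)))
      ((μa.prod μb).prod (μc.prod μd)) ((μa.prod μc).prod (μb.prod μd)) :=
  ((measurePreserving_prodAssoc μa μc (μb.prod μd)).symm MeasurableEquiv.prodAssoc).comp <|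
    ((MeasurePreserving.id μa).prod <| (measurePreserving_prodAssoc μc μb μd).comp <|
      (Measure.measurePreserving_swap.prod (MeasurePreserving.id μd)).comp <|
        (measurePreserving_prodAssoc μb μc μd).symm MeasurableEquiv.prodAssoc).comp <|
    measurePreserving_prodAssoc μa μb (μc.prod μd)

theorem integral_integral_integral_integral {E : Type*} [NormedAddCommGroup E] [NormedSpace ℝ E]
    {μa : Measure α} {μb : Measure β} {μc : Measure γ} {μd : Measure δ}
    [SFinite μa] [SFinite μb] [SFinite μc] [SFinite μd] {F : α → β → γ → δ → E}
    (hF : Integrable (fun ω => F ω.1 ω.2.1 ω.2.2.1 ω.2.2.2) (μa.prod (μb.prod (μc.prod μd)))) :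
    ∫ x, ∫ y, ∫ z, ∫ w, F x y z w ∂μd ∂μc ∂μb ∂μa
      = ∫ ω, F ω.1 ω.2.1 ω.2.2.1 ω.2.2.2 ∂(μa.prod (μb.prod (μc.prod μd))) := by
  rw [integral_prod _ hF]
  refine integral_congr_ae ?_
  filter_upwards [hF.prod_right_ae] with x hx
  rw [integral_prod _ hx]
  refine integral_congr_ae ?_
  filter_upwards [hx.prod_right_ae] with y hy
  rw [integral_prod _ hy]

theorem integral_sub_mul_sub_of_memLp {P : Measure Ω} {F₁ F₂ G₁ G₂ : Ω → ℝ}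
    (hF₁ : MemLp F₁ 2 P) (hF₂ : MemLp F₂ 2 P) (hG₁ : MemLp G₁ 2 P) (hG₂ : MemLp G₂ 2 P) :
    ∫ ω, (F₁ ω - F₂ ω) * (G₁ ω - G₂ ω) ∂P
      = (∫ ω, F₁ ω * G₁ ω ∂P) - (∫ ω, F₁ ω * G₂ ω ∂P) - (∫ ω, F₂ ω * G₁ ω ∂P)
        + ∫ ω, F₂ ω * G₂ ω ∂P := by
  have h₁₁ : Integrable (fun ω => F₁ ω * G₁ ω) P := hF₁.integrable_mul hG₁
  have h₁₂ : Integrable (fun ω => F₁ ω * G₂ ω) P := hF₁.integrable_mul hG₂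
  have h₂₁ : Integrable (fun ω => F₂ ω * G₁ ω) P := hF₂.integrable_mul hG₁
  have h₂₂ : Integrable (fun ω => F₂ ω * G₂ ω) P := hF₂.integrable_mul hG₂
  calc ∫ ω, (F₁ ω - F₂ ω) * (G₁ ω - G₂ ω) ∂P
      = ∫ ω, (F₁ ω * G₁ ω - F₁ ω * G₂ ω) - (F₂ ω * G₁ ω - F₂ ω * G₂ ω) ∂P :=
        integral_congr_ae (ae_of_all _ fun ω => by ring)
    _ = _ := by
        rw [integral_sub, integral_sub h₁₁ h₁₂, integral_sub h₂₁ h₂₂]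
        · ring
        exacts [h₁₁.sub h₁₂, h₂₁.sub h₂₂]

end MeasurePreserving

section Glue

variable {d : ℕ}

theorem glue_glue_self (u : Finset (Fin d)) (a b y : Fin d → ℝ) :
    glue u (glue u a b) y = glue u a y := by
  funext j; by_cases h : j ∈ u <;> simp [glue, h]

theorem glue_glue_of_subset_compl {u v : Finset (Fin d)} (hv : v ⊆ uᶜ) (a b z : Fin d → ℝ) :
    glue v (glue u a b) z = glue v b z := by
  funext j
  by_cases h : j ∈ v
  · simp [glue, h, Finset.mem_compl.mp (hv h)]
  · simp [glue, h]

@[fun_prop]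
theorem Measurable.glue {α : Type*} [MeasurableSpace α] (u : Finset (Fin d))
    {x y : α → Fin d → ℝ} (hx : Measurable x) (hy : Measurable y) :
    Measurable fun a => glue u (x a) (y a) :=
  measurable_pi_lambda _ fun j => by
    unfold _root_.glue
    split_ifs
    exacts [(measurable_pi_apply j).comp hx, (measurable_pi_apply j).comp hy]

variable {ν : Fin d → Measure ℝ} [∀ i, IsProbabilityMeasure (ν i)]

theorem measurePreserving_glue (u : Finset (Fin d)) :
    MeasurePreserving (fun p : (Fin d → ℝ) × (Fin d → ℝ) => glue u p.1 p.2)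
      ((Measure.pi ν).prod (Measure.pi ν)) (Measure.pi ν) := by
  classical
  set e := MeasurableEquiv.piEquivPiSubtypeProd (fun _ : Fin d => ℝ) (· ∈ u)
  have he := measurePreserving_piEquivPiSubtypeProd ν (· ∈ u)
  have h := (he.symm e).comp
    ((measurePreserving_fst.comp he).prod (measurePreserving_snd.comp he))
  convert h using 1
  funext p j
  by_cases hj : j ∈ u <;>
    simp [e, glue, hj, MeasurableEquiv.piEquivPiSubtypeProd, Equiv.piEquivPiSubtypeProd]

end Glue

section Sobol

variable {d : ℕ} {ν : Fin d → Measure ℝ} [∀ i, IsProbabilityMeasure (ν i)]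

local notation "X" => Fin d → ℝ
local notation "μ" => Measure.pi ν

theorem measurePreserving_glue_glue_of_subset_compl {u v : Finset (Fin d)} (hv : v ⊆ uᶜ) :
    MeasurePreserving (fun p : X × X × X => (glue v p.1 p.2.2, glue u p.1 p.2.1))
      (Measure.prod μ (Measure.prod μ μ)) (Measure.prod μ μ) := by
  -- Along `((a, b), (c, e)) ↦ (glue u a c, b, e)` the pair becomes `(glue v c e, glue u a b)`.
  have hΦ : MeasurePreserving (fun q : (X × X) × (X × X) => (glue u q.1.1 q.2.1, (q.1.2, q.2.2)))
      (Measure.prod (Measure.prod μ μ) (Measure.prod μ μ)) (Measure.prod μ (Measure.prod μ μ)) :=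
    ((measurePreserving_glue u).prod (MeasurePreserving.id (Measure.prod μ μ))).comp
      (measurePreserving_prodProdProdComm μ μ μ μ)
  refine hΦ.of_comp (by fun_prop) ?_
  have h := ((measurePreserving_glue (ν := ν) v).prod (measurePreserving_glue (ν := ν) u)).comp
    Measure.measurePreserving_swap
  convert h using 1
  funext q
  simp [glue_glue_of_subset_compl hv, glue_glue_self, Prod.map]

theorem integral_mul_comp_glue {f : X → ℝ} (hf : MemLp f 2 μ) (u : Finset (Fin d)) :
    ∫ p, f p.1 * f (glue u p.1 p.2) ∂(Measure.prod μ μ) = ∫ x, (∫ y, f (glue u x y) ∂μ) ^ 2 ∂μ := by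
  have hΦ : MeasurePreserving (fun r : X × X × X => (glue u r.1 r.2.1, r.2.2))
      (Measure.prod μ (Measure.prod μ μ)) (Measure.prod μ μ) :=
    ((measurePreserving_glue u).prod (MeasurePreserving.id μ)).comp
      ((measurePreserving_prodAssoc μ μ μ).symm MeasurableEquiv.prodAssoc)
  have hint : Integrable (fun r : X × X × X => f (glue u r.1 r.2.1) * f (glue u r.1 r.2.2))
      (Measure.prod μ (Measure.prod μ μ)) :=
    (hf.comp_measurePreserving ((measurePreserving_glue u).comp
      ((MeasurePreserving.id μ).prod measurePreserving_fst))).integrable_mul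
    (hf.comp_measurePreserving ((measurePreserving_glue u).comp
      ((MeasurePreserving.id μ).prod measurePreserving_snd)))
  calc ∫ p, f p.1 * f (glue u p.1 p.2) ∂(Measure.prod μ μ)
      = ∫ r, f (glue u r.1 r.2.1) * f (glue u (glue u r.1 r.2.1) r.2.2)
          ∂(Measure.prod μ (Measure.prod μ μ)) :=
        (hΦ.integral_comp_of_aestronglyMeasurable (g := fun p => f p.1 * f (glue u p.1 p.2))
          (hf.1.comp_fst.mul (hf.1.comp_measurePreserving (measurePreserving_glue u)))).symm
    _ = ∫ a, ∫ q, f (glue u a q.1) * f (glue u a q.2) ∂(Measure.prod μ μ) ∂μ := by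
        simp only [glue_glue_self]
        exact integral_prod _ hint
    _ = ∫ x, (∫ y, f (glue u x y) ∂μ) ^ 2 ∂μ := by
        refine integral_congr_ae (ae_of_all _ fun a => ?_)
        dsimp only
        rw [sq]
        exact integral_prod_mul (fun b => f (glue u a b)) (fun c => f (glue u a c))

end Sobol

theorem integral_pick_freeze_eq {d : ℕ} {ν : Fin d → Measure ℝ} [∀ i, IsProbabilityMeasure (ν i)]
    {f : (Fin d → ℝ) → ℝ} (hf : MemLp f 2 (Measure.pi ν)) {u v : Finset (Fin d)} (hv : v ⊆ uᶜ)
    (v' : Finset (Fin d)) :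
    ∫ x, ∫ y, ∫ z, ∫ w, (f x - f (glue v x z)) * (f (glue u x y) - f (glue v' y w))
        ∂(Measure.pi ν) ∂(Measure.pi ν) ∂(Measure.pi ν) ∂(Measure.pi ν)
      = ∫ x, (∫ y, f (glue u x y) ∂(Measure.pi ν)) ^ 2 ∂(Measure.pi ν)
        - (∫ x, f x ∂(Measure.pi ν)) ^ 2 := by
  set μ := Measure.pi ν
  set P := μ.prod (μ.prod (μ.prod μ))
  have hxy : MeasurePreserving (fun ω => (ω.1, ω.2.1)) P (μ.prod μ) :=
    (MeasurePreserving.id μ).prod measurePreserving_fst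
  have hx_yw : MeasurePreserving (fun ω => (ω.1, ω.2.1, ω.2.2.2)) P (μ.prod (μ.prod μ)) :=
    (MeasurePreserving.id μ).prod ((MeasurePreserving.id μ).prod measurePreserving_snd)
  have hx_yz : MeasurePreserving (fun ω => (ω.1, ω.2.1, ω.2.2.1)) P (μ.prod (μ.prod μ)) :=
    (MeasurePreserving.id μ).prod ((MeasurePreserving.id μ).prod measurePreserving_fst)
  have hxz_yw : MeasurePreserving (fun ω => ((ω.1, ω.2.2.1), (ω.2.1, ω.2.2.2))) P
      ((μ.prod μ).prod (μ.prod μ)) :=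
    (measurePreserving_prodProdProdComm μ μ μ μ).comp
      ((measurePreserving_prodAssoc μ μ (μ.prod μ)).symm MeasurableEquiv.prodAssoc)
  have hX : MemLp (fun ω => f ω.1) 2 P := hf.comp_measurePreserving measurePreserving_fst
  have hXY : MemLp (fun ω => f (glue u ω.1 ω.2.1)) 2 P :=
    hf.comp_measurePreserving ((measurePreserving_glue u).comp hxy)
  have hYW : MemLp (fun ω => f (glue v' ω.2.1 ω.2.2.2)) 2 P :=
    hf.comp_measurePreserving ((measurePreserving_glue v').comp (measurePreserving_snd.comp hx_yw))
  have hXZ : MemLp (fun ω => f (glue v ω.1 ω.2.2.1)) 2 P :=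
    hf.comp_measurePreserving ((measurePreserving_glue v).comp (measurePreserving_fst.comp hxz_yw))
  have hXXY : ∫ ω, f ω.1 * f (glue u ω.1 ω.2.1) ∂P = ∫ x, (∫ y, f (glue u x y) ∂μ) ^ 2 ∂μ :=
    (hxy.integral_comp_of_aestronglyMeasurable (g := fun p => f p.1 * f (glue u p.1 p.2))
      (hf.1.comp_fst.mul (hf.1.comp_measurePreserving (measurePreserving_glue u)))).trans
      (integral_mul_comp_glue hf u)
  have hXYW := integral_mul_of_measurePreserving_prod (P := P) (S := fun ω => ω.1)
    (T := fun ω => glue v' ω.2.1 ω.2.2.2)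
    (((MeasurePreserving.id μ).prod (measurePreserving_glue v')).comp hx_yw) hf.1 hf.1
  have hXZXY := integral_mul_of_measurePreserving_prod (P := P) (S := fun ω => glue v ω.1 ω.2.2.1)
    (T := fun ω => glue u ω.1 ω.2.1)
    ((measurePreserving_glue_glue_of_subset_compl hv).comp hx_yz) hf.1 hf.1
  have hXZYW := integral_mul_of_measurePreserving_prod (P := P) (S := fun ω => glue v ω.1 ω.2.2.1)
    (T := fun ω => glue v' ω.2.1 ω.2.2.2)
    (((measurePreserving_glue v).prod (measurePreserving_glue v')).comp hxz_yw) hf.1 hf.1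
  rw [integral_integral_integral_integral ((hX.sub hXZ).integrable_mul (hXY.sub hYW)),
    integral_sub_mul_sub_of_memLp hX hXZ hXY hYW, hXXY, hXYW, hXZXY, hXZYW]
  ring

instance : IsProbabilityMeasure unifSeg := ⟨by simp [unifSeg]⟩

theorem stmt0_general {d : ℕ} (f : (Fin d → ℝ) → ℝ)
    (hf : MemLp f 2 (unifCube d))
    (u v v' : Finset (Fin d)) (hv : v ⊆ uᶜ) :
    (∫ x, ∫ y, ∫ z, ∫ w,
        (f x - f (glue v x z)) * (f (glue u x y) - f (glue v' y w))
        ∂(unifCube d) ∂(unifCube d) ∂(unifCube d) ∂(unifCube d))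
      = lowerSobol f u :=
  integral_pick_freeze_eq hf hv v'

theorem stmt0 {d : ℕ} (hd : 1 ≤ d) (f : (Fin d → ℝ) → ℝ)
    (hf : MemLp f 2 (unifCube d))
    (u v v' : Finset (Fin d)) (hv : v ⊆ uᶜ) (hv' : v' ⊆ uᶜ) :
    (∫ x, ∫ y, ∫ z, ∫ w,
        (f x - f (glue v x z)) * (f (glue u x y) - f (glue v' y w))
        ∂(unifCube d) ∂(unifCube d) ∂(unifCube d) ∂(unifCube d))
      = lowerSobol f u :=
  stmt0_general f hf u v v' hv
end

section
/- Let f(x) = ∏_{j=1}^d h_j(x_j) be of product form with each ∫_0^1 h_j(t)^4 dt < ∞. Let u ⊆ {1,…,d} and v, v' ⊆ u^c, and let (x_i, y_i, z_i, w_i), i = 1,…,n, be i.i.d. with all four components independent and uniform on [0,1]^d. Define the estimator τ̂²_u = (1/n) Σ_{i=1}^n (f(x_i) − f(x_{i,v} : z_{i,-v})) (f(x_{i,u} : y_{i,-u}) − f(y_{i,v'} : w_{i,-v'})). Then n · Var(τ̂²_u) = E[ Q_v · Q_{u v'} ] − (τ̲²_u)², where for independent uniform x, y, z, w on [0,1]^d: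 Q_v = ∏_{j=1}^d h_j(x_j)² + ∏_{j∈v} h_j(x_j)² ∏_{j∉v} h_j(z_j)² − 2 ∏_{j∈v} h_j(x_j)² ∏_{j∉v} h_j(x_j) h_j(z_j), and Q_{u v'} = ∏_{j∈u} h_j(x_j)² ∏_{j∉u} h_j(y_j)² + ∏_{j∈v'} h_j(y_j)² ∏_{j∉v'} h_j(w_j)² − 2 ∏_{j∈u} h_j(x_j) h_j(w_j) ∏_{j∈v'} h_j(y_j)² ∏_{j∈u^c ∩ v'^c} h_j(y_j) h_j(w_j). -/
open MeasureTheory Finset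

open ProbabilityTheory

/-! The estimator is the sample mean of `n` i.i.d. copies of
`G(x, y, z, w) = (f(x) - f(x_v : z_{-v})) (f(x_u : y_{-u}) - f(y_{v'} : w_{-v'}))`,
so `n Var(τ̂²_u) = E[G²] - (E G)²`. For `f` of product form, `G²` factors pointwise as
`Q_v Q_{uv'}`, and `E G` splits into four integrals of `f(a) f(b)` where every coordinate of the
points `a`, `b` is picked from one of the four samples. Each such integral is a product over the
coordinates of `∫ h_j²` (both points pick coordinate `j` from the same sample) or `(∫ h_j)²`.
As `v ⊆ uᶜ`, only `f(x) f(x_u : y_{-u})` has coinciding picks, exactly on `u`, whence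
`E G = τ̲²_u`. -/

instance inst_s3 : IsProbabilityMeasure unifSeg := by
  constructor
  rw [unifSeg, Measure.restrict_apply_univ, Real.volume_Icc]
  norm_num

instance (d : ℕ) : IsProbabilityMeasure (unifCube d) := by
  rw [unifCube]
  infer_instance

section SampleMean

variable {Ω S : Type*} [MeasurableSpace Ω] [MeasurableSpace S] {P : Measure Ω}

theorem natCast_mul_variance_sampleMean {ν : Measure S} {n : ℕ} (hn : n ≠ 0)
    {W : Fin n → Ω → S} (hW : ∀ i, MeasurePreserving (W i) P ν)
    (hind : Pairwise fun i j => IndepFun (W i) (W j) P) {G : S → ℝ} (hG : MemLp G 2 ν) :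
    (n : ℝ) * variance (fun ω => (1 / n : ℝ) * ∑ i, G (W i ω)) P = variance G ν := by
  have hGm : AEMeasurable G ν := hG.aestronglyMeasurable.aemeasurable
  have hvar_sum : variance (∑ i, fun ω => G (W i ω)) P = ∑ i, variance (fun ω => G (W i ω)) P :=
    IndepFun.variance_sum (fun i _ => hG.comp_measurePreserving (hW i))
      fun i _ j _ hij => (hind hij).comp₀ (hW i).aemeasurable (hW j).aemeasurable
        ((hW i).map_eq ▸ hGm) ((hW j).map_eq ▸ hGm)
  have hmean : (fun ω => (1 / n : ℝ) * ∑ i, G (W i ω)) = (1 / n : ℝ) • ∑ i, fun ω => G (W i ω) := by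
    ext ω
    simp [Finset.sum_apply]
  rw [hmean, variance_smul, hvar_sum]
  simp only [fun i => (hW i).variance_fun_comp hGm, Finset.sum_const, Finset.card_univ,
    Fintype.card_fin, nsmul_eq_mul]
  field_simp

theorem ProbabilityTheory.iIndepFun.indepFun_curry_of_ne {ι κ β : Type*} [MeasurableSpace β]
    {X : ι × κ → Ω → β} (hXm : ∀ p, Measurable (X p)) (hX : iIndepFun X P) {i j : ι}
    (hij : i ≠ j) : IndepFun (fun ω k => X (i, k) ω) (fun ω k => X (j, k) ω) P := by
  have hrows := indep_iSup_of_disjoint (fun p => (hXm p).comap_le) hX.iIndep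
    (S := {p | p.1 = i}) (T := {p | p.1 = j})
    (Set.disjoint_left.2 fun p hi hj => hij (hi.symm.trans hj))
  rw [IndepFun_iff_Indep]
  refine indep_of_indep_of_le hrows ?_ ?_ <;>
  · simp only [MeasurableSpace.pi, MeasurableSpace.comap_iSup, MeasurableSpace.comap_comp,
      iSup_le_iff]
    exact fun k => le_iSup₂ (f := fun p (_ : p ∈ {p : ι × κ | p.1 = _}) =>
      MeasurableSpace.comap (X p) inferInstance) (_, k) rfl

theorem ProbabilityTheory.iIndepFun.measurePreserving_curry {ι κ β : Type*} [Fintype κ]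
    [MeasurableSpace β] {μ : Measure β} {X : ι × κ → Ω → β} (hXm : ∀ p, Measurable (X p))
    (hX : iIndepFun X P) (hlaw : ∀ p, P.map (X p) = μ) (i : ι) :
    MeasurePreserving (fun ω k => X (i, k) ω) P (Measure.pi fun _ => μ) := by
  refine ⟨measurable_pi_lambda _ fun k => hXm _, ?_⟩
  rw [(hX.precomp (Prod.mk_right_injective i)).map_fun_eq_pi_map fun k => (hXm _).aemeasurable]
  simp only [hlaw]

end SampleMean

section FourFold

variable {E : Type*} [MeasurableSpace E] (μ : Measure E) [SigmaFinite μ]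

theorem measurePreserving_vecCons_four :
    MeasurePreserving (fun p : E × E × E × E => ![p.1, p.2.1, p.2.2.1, p.2.2.2])
      (μ.prod (μ.prod (μ.prod μ))) (Measure.pi fun _ => μ) := by
  have hm : Measurable fun p : E × E × E × E => ![p.1, p.2.1, p.2.2.1, p.2.2.2] := by
    refine measurable_pi_lambda _ fun k => ?_
    fin_cases k <;> simp <;> fun_prop
  refine ⟨hm, (Measure.pi_eq fun s hs => ?_).symm⟩
  have hpre : (fun p : E × E × E × E => ![p.1, p.2.1, p.2.2.1, p.2.2.2]) ⁻¹' Set.univ.pi s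
      = s 0 ×ˢ s 1 ×ˢ s 2 ×ˢ s 3 := by
    ext p
    simp [Fin.forall_fin_succ]
  rw [Measure.map_apply hm (MeasurableSet.univ_pi hs), hpre, Measure.prod_prod, Measure.prod_prod,
    Measure.prod_prod, Fin.prod_univ_four, mul_assoc, mul_assoc]

theorem integral_pi_fin_four {F : (Fin 4 → E) → ℝ} (hF : Integrable F (Measure.pi fun _ => μ)) :
    ∫ q, F q ∂(Measure.pi fun _ => μ) = ∫ x, ∫ y, ∫ z, ∫ w, F ![x, y, z, w] ∂μ ∂μ ∂μ ∂μ := by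
  have hvec := measurePreserving_vecCons_four μ
  have hF' : Integrable (fun p : E × E × E × E => F ![p.1, p.2.1, p.2.2.1, p.2.2.2])
      (μ.prod (μ.prod (μ.prod μ))) := hvec.integrable_comp hF.aestronglyMeasurable |>.mpr hF
  rw [← hvec.map_eq, integral_map hvec.aemeasurable (hvec.map_eq ▸ hF.aestronglyMeasurable),
    integral_prod _ hF']
  refine integral_congr_ae ?_
  filter_upwards [hF'.prod_right_ae] with x hx
  rw [integral_prod _ hx]
  refine integral_congr_ae ?_
  filter_upwards [hx.prod_right_ae] with y hy
  rw [integral_prod _ hy]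

end FourFold

theorem memLp_two_of_integrable_pow_four {α : Type*} [MeasurableSpace α] {μ : Measure α}
    [IsFiniteMeasure μ] {g : α → ℝ} (hg : AEStronglyMeasurable g μ)
    (h4 : Integrable (fun t => g t ^ 4) μ) : MemLp g 2 μ ∧ MemLp (fun t => g t ^ 2) 2 μ := by
  have hsq : MemLp (fun t => g t ^ 2) 2 μ :=
    (memLp_two_iff_integrable_sq (f := fun t => g t ^ 2) (hg.pow 2)).2
      (by simpa only [← pow_mul] using h4)
  exact ⟨(memLp_two_iff_integrable_sq hg).2 (hsq.integrable one_le_two), hsq⟩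

theorem MeasureTheory.MemLp.integrable_pow_of_le_two {α : Type*} [MeasurableSpace α]
    {μ : Measure α} [IsFiniteMeasure μ] {g : α → ℝ} (hg : MemLp g 2 μ) {m : ℕ} (hm : m ≤ 2) :
    Integrable (fun t => g t ^ m) μ := by
  interval_cases m
  · simp
  · simpa using hg.integrable one_le_two
  · exact hg.integrable_sq

theorem Finset.prod_boole_add_boole {ι M : Type*} [Fintype ι] [DecidableEq ι] [CommMonoid M]
    (φ : ℕ → M) (h0 : φ 0 = 1) (a b : ι) :
    ∏ k, φ ((if a = k then 1 else 0) + (if b = k then 1 else 0))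
      = if a = b then φ 2 else φ 1 * φ 1 := by
  split_ifs with hab
  · subst hab
    rw [Finset.prod_eq_single a (fun k _ hk => by simp [Ne.symm hk, h0]) (by simp)]
    simp
  · rw [Finset.prod_eq_mul a b hab (fun k _ hk => by simp [Ne.symm hk.1, Ne.symm hk.2, h0])
      (by simp) (by simp)]
    simp [hab, Ne.symm hab]

section ProductForm

variable {d : ℕ} {ι : Type*}

theorem integral_unifCube_prod (g : Fin d → ℝ → ℝ) :
    ∫ x, ∏ j, g j (x j) ∂unifCube d = ∏ j, ∫ t, g j t ∂unifSeg :=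
  integral_fintype_prod_eq_prod (μ := fun _ => unifSeg) g

theorem integral_pi_unifCube_prod [Fintype ι] (g : ι → Fin d → ℝ → ℝ) :
    ∫ q, ∏ k, ∏ j, g k j (q k j) ∂(Measure.pi fun _ : ι => unifCube d)
      = ∏ k, ∏ j, ∫ t, g k j t ∂unifSeg := by
  rw [integral_fintype_prod_eq_prod (fun k (x : Fin d → ℝ) => ∏ j, g k j (x j))]
  exact Finset.prod_congr rfl fun k _ => integral_unifCube_prod (g k)

theorem integrable_pi_unifCube_prod [Fintype ι] {g : ι → Fin d → ℝ → ℝ}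
    (hg : ∀ k j, Integrable (g k j) unifSeg) :
    Integrable (fun q => ∏ k, ∏ j, g k j (q k j)) (Measure.pi fun _ : ι => unifCube d) :=
  Integrable.fintype_prod fun k => Integrable.fintype_prod (μ := fun _ => unifSeg) (hg k)

def pick (σ : Fin d → ι) (q : ι → Fin d → ℝ) : Fin d → ℝ := fun j => q (σ j) j

theorem glue_eq_pick (s : Finset (Fin d)) (q : ι → Fin d → ℝ) (a b : ι) :
    glue s (q a) (q b) = pick (fun j => if j ∈ s then a else b) q := by
  ext j
  simp only [glue, pick]
  split_ifs <;> rfl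

variable [Fintype ι] [DecidableEq ι] (σ τ : Fin d → ι)

def pickCount (j : Fin d) (k : ι) : ℕ := (if σ j = k then 1 else 0) + (if τ j = k then 1 else 0)

def pickProd (g : Fin d → ℝ → ℝ) (q : ι → Fin d → ℝ) : ℝ :=
  (∏ j, g j (pick σ q j)) * ∏ j, g j (pick τ q j)

variable {g : Fin d → ℝ → ℝ}

theorem pickProd_eq_prod_pow (q : ι → Fin d → ℝ) :
    pickProd σ τ g q = ∏ k, ∏ j, g j (q k j) ^ pickCount σ τ j k := by
  rw [pickProd, Finset.prod_comm, ← Finset.prod_mul_distrib]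
  refine Finset.prod_congr rfl fun j _ => ?_
  simp only [pickCount, pow_add, Finset.prod_mul_distrib, Finset.prod_pow_boole, Finset.mem_univ,
    if_true, pick]

theorem integrable_pickProd (hg : ∀ j, MemLp (g j) 2 unifSeg) :
    Integrable (pickProd σ τ g) (Measure.pi fun _ : ι => unifCube d) := by
  rw [funext (pickProd_eq_prod_pow σ τ)]
  exact integrable_pi_unifCube_prod (g := fun k j t => g j t ^ pickCount σ τ j k) fun k j =>
    (hg j).integrable_pow_of_le_two (by unfold pickCount; split_ifs <;> omega)

theorem memLp_pickProd (hg : ∀ j, MemLp (g j) 2 unifSeg)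
    (hg2 : ∀ j, MemLp (fun t => g j t ^ 2) 2 unifSeg) :
    MemLp (pickProd σ τ g) 2 (Measure.pi fun _ : ι => unifCube d) := by
  refine (memLp_two_iff_integrable_sq (integrable_pickProd σ τ hg).aestronglyMeasurable).2 ?_
  convert integrable_pickProd σ τ hg2 using 1
  ext q
  simp only [pickProd, mul_pow, Finset.prod_pow]

theorem integral_pickProd :
    ∫ q, pickProd σ τ g q ∂(Measure.pi fun _ : ι => unifCube d)
      = ∏ j, if σ j = τ j then ∫ t, g j t ^ 2 ∂unifSeg else (∫ t, g j t ∂unifSeg) ^ 2 := by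
  simp_rw [pickProd_eq_prod_pow]
  rw [integral_pi_unifCube_prod fun k j t => g j t ^ pickCount σ τ j k, Finset.prod_comm]
  refine Finset.prod_congr rfl fun j _ => ?_
  simp only [pickCount]
  rw [Finset.prod_boole_add_boole (fun m => ∫ t, g j t ^ m ∂unifSeg) (by simp)]
  simp [sq]

end ProductForm

section SobolTerm

variable {d : ℕ}

def sobolTerm (f : (Fin d → ℝ) → ℝ) (u v v' : Finset (Fin d)) (q : Fin 4 → Fin d → ℝ) : ℝ :=
  (f (q 0) - f (glue v (q 0) (q 2))) * (f (glue u (q 0) (q 1)) - f (glue v' (q 1) (q 3)))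

variable (h : Fin d → ℝ → ℝ) (u v v' : Finset (Fin d))

theorem prod_glue (s : Finset (Fin d)) (x y : Fin d → ℝ) :
    ∏ j, h j (glue s x y j) = (∏ j ∈ s, h j (x j)) * ∏ j ∈ sᶜ, h j (y j) := by
  rw [← Finset.prod_mul_prod_compl s]
  congr 1 <;> refine Finset.prod_congr rfl fun j hj => ?_ <;> simp_all [glue]

theorem sobolTerm_prod_eq_pickProd :
    sobolTerm (fun x => ∏ j, h j (x j)) u v v'
      = pickProd (fun _ => 0) (fun j => if j ∈ u then 0 else 1) h
          - pickProd (fun _ => 0) (fun j => if j ∈ v' then 1 else 3) h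
        - (pickProd (fun j => if j ∈ v then 0 else 2) (fun j => if j ∈ u then 0 else 1) h
          - pickProd (fun j => if j ∈ v then 0 else 2) (fun j => if j ∈ v' then 1 else 3) h) := by
  ext q
  simp only [sobolTerm, glue_eq_pick, pickProd, Pi.sub_apply]
  rw [show q 0 = pick (fun _ => 0) q from rfl]
  ring

theorem memLp_sobolTerm (hh : ∀ j, MemLp (h j) 2 unifSeg)
    (hh2 : ∀ j, MemLp (fun t => h j t ^ 2) 2 unifSeg) :
    MemLp (sobolTerm (fun x => ∏ j, h j (x j)) u v v') 2 (Measure.pi fun _ => unifCube d) := by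
  rw [sobolTerm_prod_eq_pickProd]
  exact ((memLp_pickProd _ _ hh hh2).sub (memLp_pickProd _ _ hh hh2)).sub
    ((memLp_pickProd _ _ hh hh2).sub (memLp_pickProd _ _ hh hh2))

theorem integral_sobolTerm (hh : ∀ j, MemLp (h j) 2 unifSeg) (hv : v ⊆ uᶜ) :
    ∫ q, sobolTerm (fun x => ∏ j, h j (x j)) u v v' q ∂(Measure.pi fun _ => unifCube d)
      = (∏ j, if j ∈ u then ∫ t, h j t ^ 2 ∂unifSeg else (∫ t, h j t ∂unifSeg) ^ 2)
        - ∏ j, (∫ t, h j t ∂unifSeg) ^ 2 := by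
  have hint (σ τ : Fin d → Fin 4) := integrable_pickProd σ τ hh
  have hdiag {σ τ : Fin d → Fin 4} (hστ : ∀ j, σ j ≠ τ j) :
      (∏ j, if σ j = τ j then ∫ t, h j t ^ 2 ∂unifSeg else (∫ t, h j t ∂unifSeg) ^ 2)
        = ∏ j, (∫ t, h j t ∂unifSeg) ^ 2 :=
    Finset.prod_congr rfl fun j _ => if_neg (hστ j)
  have hu : ∀ j, ((0 : Fin 4) = if j ∈ u then 0 else 1) ↔ j ∈ u := fun j => by
    split_ifs <;> simp_all
  have hvu : ∀ j ∈ v, j ∉ u := fun j hj => Finset.mem_compl.1 (hv hj)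
  rw [sobolTerm_prod_eq_pickProd, integral_sub' ((hint _ _).sub (hint _ _))
    ((hint _ _).sub (hint _ _)), integral_sub' (hint _ _) (hint _ _),
    integral_sub' (hint _ _) (hint _ _), integral_pickProd, integral_pickProd, integral_pickProd,
    integral_pickProd]
  simp only [hu]
  rw [hdiag fun j => by split_ifs <;> decide,
    hdiag fun j => by split_ifs <;> simp_all,
    hdiag fun j => by split_ifs <;> decide, sub_self, sub_zero]

theorem lowerSobol_prod :
    lowerSobol (fun x => ∏ j, h j (x j)) u
      = (∏ j, if j ∈ u then ∫ t, h j t ^ 2 ∂unifSeg else (∫ t, h j t ∂unifSeg) ^ 2)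
        - ∏ j, (∫ t, h j t ∂unifSeg) ^ 2 := by
  have hinner : ∀ x : Fin d → ℝ, ∫ y, ∏ j, h j (glue u x y j) ∂unifCube d
      = ∏ j, if j ∈ u then h j (x j) else ∫ t, h j t ∂unifSeg := fun x => by
    simp only [glue, apply_ite (h _)]
    rw [integral_unifCube_prod fun j t => if j ∈ u then h j (x j) else h j t]
    refine Finset.prod_congr rfl fun j _ => ?_
    split_ifs <;> simp
  simp only [lowerSobol, hinner, ← Finset.prod_pow, ite_pow]
  rw [integral_unifCube_prod fun j t => if j ∈ u then h j t ^ 2 else (∫ s, h j s ∂unifSeg) ^ 2,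
    integral_unifCube_prod h, Finset.prod_pow]
  congr 1
  refine Finset.prod_congr rfl fun j _ => ?_
  split_ifs <;> simp

theorem sq_prod_sub_prod_glue (x z : Fin d → ℝ) :
    (∏ j, h j (x j) - ∏ j, h j (glue v x z j)) ^ 2
      = (∏ j, h j (x j) ^ 2)
          + (∏ j ∈ v, h j (x j) ^ 2) * (∏ j ∈ vᶜ, h j (z j) ^ 2)
          - 2 * (∏ j ∈ v, h j (x j) ^ 2) * ∏ j ∈ vᶜ, h j (x j) * h j (z j) := by
  rw [prod_glue, ← Finset.prod_mul_prod_compl v, ← Finset.prod_mul_prod_compl v]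
  simp only [Finset.prod_pow, Finset.prod_mul_distrib]
  ring

theorem sq_prod_glue_sub_prod_glue (hv' : v' ⊆ uᶜ) (x y w : Fin d → ℝ) :
    (∏ j, h j (glue u x y j) - ∏ j, h j (glue v' y w j)) ^ 2
      = (∏ j ∈ u, h j (x j) ^ 2) * (∏ j ∈ uᶜ, h j (y j) ^ 2)
          + (∏ j ∈ v', h j (y j) ^ 2) * (∏ j ∈ v'ᶜ, h j (w j) ^ 2)
          - 2 * (∏ j ∈ u, h j (x j) * h j (w j)) * (∏ j ∈ v', h j (y j) ^ 2)
              * ∏ j ∈ uᶜ ∩ v'ᶜ, h j (y j) * h j (w j) := by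
  have hsplit_u (g : Fin d → ℝ) : ∏ j ∈ uᶜ, g j = (∏ j ∈ v', g j) * ∏ j ∈ uᶜ ∩ v'ᶜ, g j := by
    rw [← Finset.prod_inter_mul_prod_sdiff uᶜ v', Finset.inter_eq_right.2 hv',
      Finset.sdiff_eq_inter_compl]
  have hsplit_v' (g : Fin d → ℝ) : ∏ j ∈ v'ᶜ, g j = (∏ j ∈ u, g j) * ∏ j ∈ uᶜ ∩ v'ᶜ, g j := by
    rw [← Finset.prod_inter_mul_prod_sdiff v'ᶜ u,
      Finset.inter_eq_right.2 (Finset.subset_compl_comm.1 hv'), Finset.sdiff_eq_inter_compl,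
      Finset.inter_comm]
  rw [prod_glue, prod_glue, hsplit_u (fun j => h j (y j)), hsplit_u (fun j => h j (y j) ^ 2),
    hsplit_v' (fun j => h j (w j)), hsplit_v' (fun j => h j (w j) ^ 2)]
  simp only [Finset.prod_pow, Finset.prod_mul_distrib]
  ring

theorem sobolTerm_vecCons_sq (hv' : v' ⊆ uᶜ) (x y z w : Fin d → ℝ) :
    sobolTerm (fun x => ∏ j, h j (x j)) u v v' ![x, y, z, w] ^ 2
      = ((∏ j, h j (x j) ^ 2)
          + (∏ j ∈ v, h j (x j) ^ 2) * (∏ j ∈ vᶜ, h j (z j) ^ 2)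
          - 2 * (∏ j ∈ v, h j (x j) ^ 2) * ∏ j ∈ vᶜ, h j (x j) * h j (z j))
        * ((∏ j ∈ u, h j (x j) ^ 2) * (∏ j ∈ uᶜ, h j (y j) ^ 2)
          + (∏ j ∈ v', h j (y j) ^ 2) * (∏ j ∈ v'ᶜ, h j (w j) ^ 2)
          - 2 * (∏ j ∈ u, h j (x j) * h j (w j)) * (∏ j ∈ v', h j (y j) ^ 2)
              * ∏ j ∈ uᶜ ∩ v'ᶜ, h j (y j) * h j (w j)) := by
  rw [sobolTerm, mul_pow]
  exact congrArg₂ _ (sq_prod_sub_prod_glue h v x z) (sq_prod_glue_sub_prod_glue h u v' hv' x y w)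

end SobolTerm

theorem stmt3_general {d : ℕ} (h : Fin d → ℝ → ℝ)
    (hmeas : ∀ j, Measurable (h j))
    (hint4 : ∀ j, Integrable (fun t => h j t ^ 4) unifSeg)
    (u v v' : Finset (Fin d)) (hv : v ⊆ uᶜ) (hv' : v' ⊆ uᶜ)
    (n : ℕ) (hn : 0 < n)
    {Ω : Type*} [MeasurableSpace Ω] (P : Measure Ω) [IsProbabilityMeasure P]
    -- `X (i, 0) = xᵢ`, `X (i, 1) = yᵢ`, `X (i, 2) = zᵢ`, `X (i, 3) = wᵢ`:
    -- i.i.d. quadruples whose four components are independent, i.e. the whole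
    -- family of `4 n` random vectors is independent and uniform on `[0,1]^d`.
    (X : Fin n × Fin 4 → Ω → (Fin d → ℝ))
    (hXmeas : ∀ i, Measurable (X i))
    (hXindep : iIndepFun X P)
    (hXunif : ∀ i, Measure.map (X i) P = unifCube d)
    -- the product-form integrand `f` and the generalized estimator `est`
    (f : (Fin d → ℝ) → ℝ) (hf : f = fun x => ∏ j, h j (x j))
    (est : Ω → ℝ)
    (hest : est = fun ω => (1 / (n : ℝ)) * ∑ i : Fin n,
        (f (X (i, 0) ω) - f (glue v (X (i, 0) ω) (X (i, 2) ω)))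
          * (f (glue u (X (i, 0) ω) (X (i, 1) ω))
              - f (glue v' (X (i, 1) ω) (X (i, 3) ω)))) :
    (n : ℝ) * variance est P
      = (∫ x, ∫ y, ∫ z, ∫ w,
            ((∏ j, h j (x j) ^ 2)
              + (∏ j ∈ v, h j (x j) ^ 2) * (∏ j ∈ vᶜ, h j (z j) ^ 2)
              - 2 * (∏ j ∈ v, h j (x j) ^ 2) * ∏ j ∈ vᶜ, h j (x j) * h j (z j))
          * ((∏ j ∈ u, h j (x j) ^ 2) * (∏ j ∈ uᶜ, h j (y j) ^ 2)
              + (∏ j ∈ v', h j (y j) ^ 2) * (∏ j ∈ v'ᶜ, h j (w j) ^ 2)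
              - 2 * (∏ j ∈ u, h j (x j) * h j (w j))
                  * (∏ j ∈ v', h j (y j) ^ 2)
                  * ∏ j ∈ uᶜ ∩ v'ᶜ, h j (y j) * h j (w j))
            ∂(unifCube d) ∂(unifCube d) ∂(unifCube d) ∂(unifCube d))
        - (lowerSobol f u) ^ 2 := by
  subst hf hest
  have hh (j : Fin d) := memLp_two_of_integrable_pow_four (hmeas j).aestronglyMeasurable (hint4 j)
  have hG := memLp_sobolTerm h u v v' (fun j => (hh j).1) fun j => (hh j).2
  calc (n : ℝ) * variance _ P
      = variance (sobolTerm (fun x => ∏ j, h j (x j)) u v v') (Measure.pi fun _ => unifCube d) :=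
        natCast_mul_variance_sampleMean hn.ne' (hXindep.measurePreserving_curry hXmeas hXunif)
          (fun i j hij => hXindep.indepFun_curry_of_ne hXmeas hij) hG
    _ = _ := by
      rw [variance_eq_sub hG]
      simp only [Pi.pow_apply]
      rw [integral_pi_fin_four _ hG.integrable_sq,
        integral_sobolTerm h u v v' (fun j => (hh j).1) hv, lowerSobol_prod]
      simp only [sobolTerm_vecCons_sq h u v v' hv']

theorem stmt3 {d : ℕ} (hd : 1 ≤ d) (h : Fin d → ℝ → ℝ)
    (hmeas : ∀ j, Measurable (h j))
    (hint4 : ∀ j, Integrable (fun t => h j t ^ 4) unifSeg)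
    (u v v' : Finset (Fin d)) (hv : v ⊆ uᶜ) (hv' : v' ⊆ uᶜ)
    (n : ℕ) (hn : 0 < n)
    {Ω : Type*} [MeasurableSpace Ω] (P : Measure Ω) [IsProbabilityMeasure P]
    -- `X (i, 0) = xᵢ`, `X (i, 1) = yᵢ`, `X (i, 2) = zᵢ`, `X (i, 3) = wᵢ`:
    -- i.i.d. quadruples whose four components are independent, i.e. the whole
    -- family of `4 n` random vectors is independent and uniform on `[0,1]^d`.
    (X : Fin n × Fin 4 → Ω → (Fin d → ℝ))
    (hXmeas : ∀ i, Measurable (X i))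
    (hXindep : iIndepFun X P)
    (hXunif : ∀ i, Measure.map (X i) P = unifCube d)
    -- the product-form integrand `f` and the generalized estimator `est`
    (f : (Fin d → ℝ) → ℝ) (hf : f = fun x => ∏ j, h j (x j))
    (est : Ω → ℝ)
    (hest : est = fun ω => (1 / (n : ℝ)) * ∑ i : Fin n,
        (f (X (i, 0) ω) - f (glue v (X (i, 0) ω) (X (i, 2) ω)))
          * (f (glue u (X (i, 0) ω) (X (i, 1) ω))
              - f (glue v' (X (i, 1) ω) (X (i, 3) ω)))) :
    (n : ℝ) * variance est P
      = (∫ x, ∫ y, ∫ z, ∫ w,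
            ((∏ j, h j (x j) ^ 2)
              + (∏ j ∈ v, h j (x j) ^ 2) * (∏ j ∈ vᶜ, h j (z j) ^ 2)
              - 2 * (∏ j ∈ v, h j (x j) ^ 2) * ∏ j ∈ vᶜ, h j (x j) * h j (z j))
          * ((∏ j ∈ u, h j (x j) ^ 2) * (∏ j ∈ uᶜ, h j (y j) ^ 2)
              + (∏ j ∈ v', h j (y j) ^ 2) * (∏ j ∈ v'ᶜ, h j (w j) ^ 2)
              - 2 * (∏ j ∈ u, h j (x j) * h j (w j))
                  * (∏ j ∈ v', h j (y j) ^ 2)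
                  * ∏ j ∈ uᶜ ∩ v'ᶜ, h j (y j) * h j (w j))
            ∂(unifCube d) ∂(unifCube d) ∂(unifCube d) ∂(unifCube d))
        - (lowerSobol f u) ^ 2 :=
  stmt3_general h hmeas hint4 u v v' hv hv' n hn P X hXmeas hXindep hXunif f hf est hest
end
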